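/- arXiv:2011.00197 — 2 statements merged into one kernel-verified Lean document; each statement's English description precedes it below -/
import Mathlib

section
/- Let A₂ ⊊ A₁ ⊆ F₂^t be binary linear codes and let M ≥ 2 be an even integer. Define C₂ = {a ⊗ 1_M : a ∈ A₂} ⊆ F₂^{tM} and C_Z = {(b ⊗ e₁) + w : b ∈ A₁^⊥, w ∈ W^{(1)} + ⋯ + W^{(t)}} ⊆ F₂^{tM}. Then: (a) every vector of C₂ is orthogonal to every vector of C_Z, so (C₂, C_Z) defines a CSS code on tM qubits; (b) dim C₂ = dim A₂ and dim C_Z = (t − dim A₁) + t(M − 1), so the CSS code encodes tM − dim C₂ − dim C_Z = dim A₁ − dim A₂ logical qubits; (c) C_Z^⊥ = {f ⊗ 1_M : f ∈ A₁}, every v ∈ C_Z^⊥ ∖ C₂ has w_H(v) ≥ M·d_min(A₁), and every z ∈ C₂^⊥ ∖ C_Z has w_H(z) ≥ d_min(A₂^⊥); hence the minimum distance of the CSS code is at least min(M·d_min(A₁), d_min(A₂^⊥)). -/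
/-!
Write `R a = a ⊗ 1_M` for repetition and `σ : F₂^{tM} → F₂^t` for the blockwise sum. They are
adjoint for the dot product, `R a ⬝ z = a ⬝ σ z`, and `σ (b ⊗ e₁) = b`. Hence
`C_Z = (A₁^⊥ ⊗ e₁) ⊕ ker σ`, which gives its dimension, and `σ` maps `C_Z` into `A₁^⊥`, so
`R A₁ ⊆ C_Z^⊥`; comparing dimensions, `C_Z^⊥ = R A₁ ⊇ R A₂ = C₂`. For the distance,
`w(R f) = M w(f)` and `w(σ z) ≤ w(z)`; a `z ∈ C₂^⊥ ∖ C_Z` has `σ z ∈ A₂^⊥`, and `σ z ≠ 0`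
because `ker σ ⊆ C_Z`.
-/

open Finset Module

section DualCode

variable {K n : Type*} [Field K] [Fintype n]

def dualCode (S : Submodule K (n → K)) : Submodule K (n → K) where
  carrier := {b | ∀ v ∈ S, b ⬝ᵥ v = 0}
  add_mem' ha hb v hv := by rw [add_dotProduct, ha v hv, hb v hv, add_zero]
  zero_mem' v _ := zero_dotProduct v
  smul_mem' c a ha v hv := by rw [smul_dotProduct, ha v hv, smul_zero]

theorem mem_dualCode {S : Submodule K (n → K)} {b : n → K} :
    b ∈ dualCode S ↔ ∀ v ∈ S, b ⬝ᵥ v = 0 := Iff.rfl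

theorem dualCode_eq_comap_dualAnnihilator [DecidableEq n] (S : Submodule K (n → K)) :
    dualCode S = S.dualAnnihilator.comap (dotProductEquiv K n).toLinearMap := by
  ext b
  simp [mem_dualCode, Submodule.mem_dualAnnihilator]

theorem finrank_dualCode (S : Submodule K (n → K)) :
    finrank K (dualCode S) = Fintype.card n - finrank K S := by
  classical
  rw [dualCode_eq_comap_dualAnnihilator, Submodule.comap_equiv_eq_map_symm,
    LinearEquiv.finrank_map_eq]
  have := Subspace.finrank_add_finrank_dualAnnihilator_eq S
  rw [finrank_fintype_fun_eq_card] at this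
  omega

theorem dualCode_dualCode (S : Submodule K (n → K)) : dualCode (dualCode S) = S := by
  refine (Submodule.eq_of_le_of_finrank_le (fun v hv b hb => ?_) ?_).symm
  · rw [dotProduct_comm]
    exact hb v hv
  · have := S.finrank_le
    rw [finrank_fintype_fun_eq_card] at this
    rw [finrank_dualCode, finrank_dualCode]
    omega

end DualCode

section MinWeight

variable {R n : Type*} [Semiring R] [DecidableEq R] [Fintype n]

noncomputable def minWeight (A : Submodule R (n → R)) : ℕ :=
  sInf {k | ∃ a ∈ A, a ≠ 0 ∧ hammingNorm a = k}

theorem minWeight_le_hammingNorm {A : Submodule R (n → R)} {a : n → R} (ha : a ∈ A)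
    (ha0 : a ≠ 0) : minWeight A ≤ hammingNorm a :=
  Nat.sInf_le ⟨a, ha, ha0, rfl⟩

end MinWeight

section Blocks

variable {R ι κ : Type*} [CommSemiring R]

def blockRepeat : (ι → R) →ₗ[R] (ι × κ → R) := LinearMap.funLeft R R Prod.fst

theorem blockRepeat_apply (a : ι → R) : blockRepeat a = fun p : ι × κ => a p.1 := rfl

theorem coe_map_blockRepeat (A : Submodule R (ι → R)) :
    ((A.map blockRepeat : Submodule R (ι × κ → R)) : Set (ι × κ → R))
      = {x | ∃ a ∈ A, x = fun p => a p.1} := by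
  ext x
  simp [blockRepeat_apply, eq_comm]

variable [Fintype κ]

def blockSum : (ι × κ → R) →ₗ[R] (ι → R) where
  toFun z i := ∑ j, z (i, j)
  map_add' _ _ := funext fun _ => sum_add_distrib
  map_smul' _ _ := funext fun _ => (mul_sum ..).symm

theorem mem_ker_blockSum {z : ι × κ → R} :
    z ∈ LinearMap.ker (blockSum : (ι × κ → R) →ₗ[R] (ι → R)) ↔ ∀ i, ∑ j, z (i, j) = 0 :=
  funext_iff

theorem dotProduct_blockRepeat [Fintype ι] (a : ι → R) (z : ι × κ → R) :
    blockRepeat a ⬝ᵥ z = a ⬝ᵥ blockSum z := by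
  simp only [dotProduct, blockRepeat_apply, blockSum, LinearMap.coe_mk, AddHom.coe_mk,
    Fintype.sum_prod_type, mul_sum]

variable [DecidableEq κ]

def blockSingle (j₀ : κ) : (ι → R) →ₗ[R] (ι × κ → R) where
  toFun b p := if p.2 = j₀ then b p.1 else 0
  map_add' _ _ := funext fun p => by by_cases h : p.2 = j₀ <;> simp [h]
  map_smul' _ _ := funext fun p => by by_cases h : p.2 = j₀ <;> simp [h]

theorem blockSingle_zero {M : ℕ} [NeZero M] (b : ι → R) :
    blockSingle (0 : Fin M) b = fun p => b p.1 * if (p.2 : ℕ) = 0 then 1 else 0 := by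
  funext p
  simp [blockSingle, Fin.val_eq_zero_iff, mul_ite]

theorem blockSum_blockSingle (j₀ : κ) (b : ι → R) : blockSum (blockSingle j₀ b) = b := by
  funext i
  simp [blockSum, blockSingle]

end Blocks

section Weights

variable {R ι κ : Type*} [CommSemiring R] [DecidableEq R] [Fintype ι] [Fintype κ]

theorem hammingNorm_blockRepeat (f : ι → R) :
    hammingNorm (blockRepeat f : ι × κ → R) = Fintype.card κ * hammingNorm f := by
  rw [hammingNorm, hammingNorm, mul_comm, ← card_univ (α := κ), ← card_product,
    ← univ_product_univ, ← filter_product_left]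
  rfl

theorem hammingNorm_blockSum_le (z : ι × κ → R) :
    hammingNorm (blockSum z) ≤ hammingNorm z := by
  refine card_le_card_of_surjOn Prod.fst fun i hi => ?_
  obtain ⟨j, -, hj⟩ := exists_ne_zero_of_sum_ne_zero (mem_filter.mp hi).2
  exact ⟨(i, j), mem_filter.mpr ⟨mem_univ _, hj⟩, rfl⟩

theorem mul_minWeight_le_hammingNorm {A B : Submodule R (ι → R)} {v : ι × κ → R}
    (hv : v ∈ A.map blockRepeat) (hvB : v ∉ B.map blockRepeat) :
    Fintype.card κ * minWeight A ≤ hammingNorm v := by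
  obtain ⟨f, hf, rfl⟩ := hv
  have hf0 : f ≠ 0 := by
    rintro rfl
    exact hvB (zero_mem _)
  rw [hammingNorm_blockRepeat]
  exact Nat.mul_le_mul_left _ (minWeight_le_hammingNorm hf hf0)

end Weights

section BlockCode

variable {K ι κ : Type*} [Field K]

theorem blockRepeat_injective [Nonempty κ] :
    Function.Injective (blockRepeat : (ι → K) →ₗ[K] (ι × κ → K)) :=
  LinearMap.funLeft_injective_of_surjective _ _ _ Prod.fst_surjective

theorem finrank_map_blockRepeat [Nonempty κ] (A : Submodule K (ι → K)) :
    finrank K (A.map (blockRepeat : (ι → K) →ₗ[K] (ι × κ → K))) = finrank K A :=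
  (Submodule.equivMapOfInjective _ blockRepeat_injective A).finrank_eq.symm

variable [Fintype κ] [DecidableEq κ]

theorem finrank_ker_blockSum [Fintype ι] [Nonempty κ] :
    finrank K (LinearMap.ker (blockSum : (ι × κ → K) →ₗ[K] (ι → K)))
      = Fintype.card ι * (Fintype.card κ - 1) := by
  obtain ⟨j₀⟩ := ‹Nonempty κ›
  have hsurj : LinearMap.range (blockSum : (ι × κ → K) →ₗ[K] (ι → K)) = ⊤ :=
    LinearMap.range_eq_top.mpr fun b => ⟨blockSingle j₀ b, blockSum_blockSingle j₀ b⟩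
  have := LinearMap.finrank_range_add_finrank_ker (blockSum : (ι × κ → K) →ₗ[K] (ι → K))
  rw [hsurj, finrank_top, finrank_fintype_fun_eq_card, finrank_fintype_fun_eq_card,
    Fintype.card_prod] at this
  rw [Nat.mul_sub_one]
  omega

def blockCode (D : Submodule K (ι → K)) (j₀ : κ) : Submodule K (ι × κ → K) :=
  D.map (blockSingle j₀) ⊔ LinearMap.ker blockSum

variable (D : Submodule K (ι → K)) (j₀ : κ)

theorem mem_blockCode_iff {z : ι × κ → K} :
    z ∈ blockCode D j₀ ↔ ∃ b ∈ D, ∃ w ∈ LinearMap.ker blockSum, z = blockSingle j₀ b + w := by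
  simp only [blockCode, Submodule.mem_sup, Submodule.mem_map, exists_exists_and_eq_and,
    @eq_comm _ z]

theorem blockCode_le_comap_blockSum : blockCode D j₀ ≤ D.comap blockSum :=
  sup_le (Submodule.map_le_iff_le_comap.mp fun b hb => by simpa [blockSum_blockSingle] using hb)
    fun w hw => by simp [LinearMap.mem_ker.mp hw]

variable [Fintype ι]

theorem finrank_blockCode :
    finrank K (blockCode D j₀) = finrank K D + Fintype.card ι * (Fintype.card κ - 1) := by
  have : Nonempty κ := ⟨j₀⟩
  have hinj : Function.Injective (blockSingle j₀ : (ι → K) →ₗ[K] (ι × κ → K)) :=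
    Function.LeftInverse.injective (blockSum_blockSingle j₀)
  have hdisj : D.map (blockSingle j₀) ⊓ LinearMap.ker blockSum = ⊥ := by
    refine (Submodule.eq_bot_iff _).mpr fun z hz => ?_
    obtain ⟨⟨b, -, rfl⟩, hzK⟩ := Submodule.mem_inf.mp hz
    rw [LinearMap.mem_ker, blockSum_blockSingle] at hzK
    rw [hzK, map_zero]
  have := Submodule.finrank_sup_add_finrank_inf_eq (D.map (blockSingle j₀))
    (LinearMap.ker blockSum)
  rwa [hdisj, finrank_bot, add_zero, ← (Submodule.equivMapOfInjective _ hinj D).finrank_eq,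
    finrank_ker_blockSum] at this

theorem dualCode_blockCode : dualCode (blockCode D j₀) = (dualCode D).map blockRepeat := by
  have : Nonempty κ := ⟨j₀⟩
  have hle : (dualCode D).map blockRepeat ≤ dualCode (blockCode D j₀) := by
    rintro _ ⟨f, hf, rfl⟩ z hz
    rw [dotProduct_blockRepeat]
    exact hf _ (blockCode_le_comap_blockSum D j₀ hz)
  refine (Submodule.eq_of_le_of_finrank_le hle ?_).symm
  rw [finrank_map_blockRepeat, finrank_dualCode, finrank_dualCode, finrank_blockCode,
    Fintype.card_prod, Nat.mul_sub_one]
  have := D.finrank_le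
  rw [finrank_fintype_fun_eq_card] at this
  have := Nat.le_mul_of_pos_right (Fintype.card ι) (Fintype.card_pos (α := κ))
  omega

theorem card_sub_finrank_map_blockRepeat_sub_finrank_blockCode {A B : Submodule K (ι → K)}
    (hBA : B ≤ A) :
    Fintype.card (ι × κ) - finrank K (B.map (blockRepeat : (ι → K) →ₗ[K] (ι × κ → K)))
      - finrank K (blockCode (dualCode A) j₀) = finrank K A - finrank K B := by
  have : Nonempty κ := ⟨j₀⟩
  have hA := A.finrank_le
  have hB := Submodule.finrank_mono hBA
  have := Nat.le_mul_of_pos_right (Fintype.card ι) (Fintype.card_pos (α := κ))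
  rw [finrank_fintype_fun_eq_card] at hA
  rw [finrank_map_blockRepeat, finrank_blockCode, finrank_dualCode, Fintype.card_prod,
    Nat.mul_sub_one]
  omega

omit [DecidableEq κ] in
theorem minWeight_dualCode_le_hammingNorm [DecidableEq K] {A : Submodule K (ι → K)}
    {z : ι × κ → K} (hz : z ∈ dualCode (A.map blockRepeat)) (hz0 : z ∉ LinearMap.ker blockSum) :
    minWeight (dualCode A) ≤ hammingNorm z := by
  have hdual : blockSum z ∈ dualCode A := fun a ha => by
    rw [dotProduct_comm, ← dotProduct_blockRepeat, dotProduct_comm]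
    exact hz _ (Submodule.mem_map_of_mem ha)
  exact (minWeight_le_hammingNorm hdual hz0).trans (hammingNorm_blockSum_le z)

end BlockCode

theorem css_product_construction_general (t M : ℕ) (hM : 2 ≤ M)
    (A₂ A₁ : Submodule (ZMod 2) (Fin t → ZMod 2)) (hsub : A₂ < A₁)
    (C₂ CZ : Submodule (ZMod 2) (Fin t × Fin M → ZMod 2))
    (hC₂ : (C₂ : Set (Fin t × Fin M → ZMod 2))
      = {x | ∃ a ∈ A₂, x = fun p => a p.1})
    (hCZ : (CZ : Set (Fin t × Fin M → ZMod 2))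
      = {z | ∃ b : Fin t → ZMod 2, (∀ v ∈ A₁, b ⬝ᵥ v = 0) ∧
          ∃ w : Fin t × Fin M → ZMod 2, (∀ k, ∑ j, w (k, j) = 0) ∧
            z = (fun p : Fin t × Fin M => b p.1 * (if (p.2 : ℕ) = 0 then 1 else 0)) + w}) :
    -- (a)
    (∀ x ∈ C₂, ∀ z ∈ CZ, x ⬝ᵥ z = 0) ∧
    -- (b)
    Module.finrank (ZMod 2) C₂ = Module.finrank (ZMod 2) A₂ ∧
    Module.finrank (ZMod 2) CZ = (t - Module.finrank (ZMod 2) A₁) + t * (M - 1) ∧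
    t * M - Module.finrank (ZMod 2) C₂ - Module.finrank (ZMod 2) CZ
      = Module.finrank (ZMod 2) A₁ - Module.finrank (ZMod 2) A₂ ∧
    -- (c)
    ({v : Fin t × Fin M → ZMod 2 | ∀ z ∈ CZ, v ⬝ᵥ z = 0}
      = {v : Fin t × Fin M → ZMod 2 | ∃ f ∈ A₁, v = fun p => f p.1}) ∧
    (∀ v : Fin t × Fin M → ZMod 2, (∀ z ∈ CZ, v ⬝ᵥ z = 0) → v ∉ C₂ →
      M * sInf {k | ∃ a ∈ A₁, a ≠ 0 ∧ hammingNorm a = k} ≤ hammingNorm v) ∧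
    (∀ z : Fin t × Fin M → ZMod 2, (∀ x ∈ C₂, z ⬝ᵥ x = 0) → z ∉ CZ →
      sInf {k | ∃ a : Fin t → ZMod 2, (∀ v ∈ A₂, a ⬝ᵥ v = 0) ∧ a ≠ 0 ∧ hammingNorm a = k}
        ≤ hammingNorm z) ∧
    (∀ v : Fin t × Fin M → ZMod 2,
      ((∀ z ∈ CZ, v ⬝ᵥ z = 0) ∧ v ∉ C₂) ∨ ((∀ x ∈ C₂, v ⬝ᵥ x = 0) ∧ v ∉ CZ) →
      min (M * sInf {k | ∃ a ∈ A₁, a ≠ 0 ∧ hammingNorm a = k})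
          (sInf {k | ∃ a : Fin t → ZMod 2,
            (∀ u ∈ A₂, a ⬝ᵥ u = 0) ∧ a ≠ 0 ∧ hammingNorm a = k})
        ≤ hammingNorm v) := by
  have : NeZero M := ⟨by omega⟩
  have hX : C₂ = A₂.map blockRepeat :=
    SetLike.coe_injective (hC₂.trans (coe_map_blockRepeat A₂).symm)
  have hZ : CZ = blockCode (dualCode A₁) (0 : Fin M) := SetLike.coe_injective <| hCZ.trans <| by
    ext z
    simp only [← blockSingle_zero, ← mem_dualCode, ← mem_ker_blockSum, Set.mem_ofPred_eq,
      SetLike.mem_coe, mem_blockCode_iff]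
  have hdual : dualCode CZ = A₁.map blockRepeat := by
    rw [hZ, dualCode_blockCode, dualCode_dualCode]
  have hweightX : ∀ v ∈ dualCode CZ, v ∉ C₂ → M * minWeight A₁ ≤ hammingNorm v :=
    fun v hv hvX => by
      simpa only [Fintype.card_fin] using
        mul_minWeight_le_hammingNorm (κ := Fin M) (hdual ▸ hv) (hX ▸ hvX)
  have hweightZ : ∀ z ∈ dualCode C₂, z ∉ CZ → minWeight (dualCode A₂) ≤ hammingNorm z :=
    fun z hz hzZ => minWeight_dualCode_le_hammingNorm (hX ▸ hz) fun h =>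
      hzZ (hZ ▸ Submodule.mem_sup_right h)
  have hXZ : C₂ ≤ dualCode CZ := by
    rw [hX, hdual]
    exact Submodule.map_mono hsub.le
  refine ⟨hXZ, hX ▸ finrank_map_blockRepeat A₂,
    hZ ▸ by simp [finrank_blockCode, finrank_dualCode],
    hX ▸ hZ ▸ by simpa using
      card_sub_finrank_map_blockRepeat_sub_finrank_blockCode (0 : Fin M) hsub.le,
    (congrArg SetLike.coe hdual).trans (coe_map_blockRepeat A₁), hweightX, hweightZ, ?_⟩
  rintro v (⟨hv, hvX⟩ | ⟨hv, hvZ⟩)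
  · exact (min_le_left _ _).trans (hweightX v hv hvX)
  · exact (min_le_right _ _).trans (hweightZ v hv hvZ)

/-- the CSS construction of Section VI. Let `A₂ ⊊ A₁ ⊆ F₂^t` be binary
linear codes and `M ≥ 2` even. With coordinates `F₂^{tM}` indexed by `Fin t × Fin M` (block
`k` being `{k} × Fin M`), let `C₂ = {a ⊗ 1_M : a ∈ A₂}` and
`C_Z = {(b ⊗ e₁) + w : b ∈ A₁^⊥, w ∈ W^{(1)} + ⋯ + W^{(t)}}` (where
`W^{(1)} + ⋯ + W^{(t)}` is the code of vectors all of whose blocks have even weight). Then: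
(a) `C₂ ⟂ C_Z`, so `(C₂, C_Z)` defines a CSS code on `tM` qubits;
(b) `dim C₂ = dim A₂`, `dim C_Z = (t − dim A₁) + t(M−1)`, and the code encodes
`tM − dim C₂ − dim C_Z = dim A₁ − dim A₂` logical qubits;
(c) `C_Z^⊥ = {f ⊗ 1_M : f ∈ A₁}`, every `v ∈ C_Z^⊥ ∖ C₂` has `w_H(v) ≥ M·d_min(A₁)`, and
every `z ∈ C₂^⊥ ∖ C_Z` has `w_H(z) ≥ d_min(A₂^⊥)`; hence the minimum distance is at least
`min(M·d_min(A₁), d_min(A₂^⊥))`. -/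
theorem css_product_construction (t M : ℕ) (ht : 1 ≤ t) (hM : 2 ≤ M) (hMeven : Even M)
    (A₂ A₁ : Submodule (ZMod 2) (Fin t → ZMod 2)) (hsub : A₂ < A₁)
    (C₂ CZ : Submodule (ZMod 2) (Fin t × Fin M → ZMod 2))
    (hC₂ : (C₂ : Set (Fin t × Fin M → ZMod 2))
      = {x | ∃ a ∈ A₂, x = fun p => a p.1})
    (hCZ : (CZ : Set (Fin t × Fin M → ZMod 2))
      = {z | ∃ b : Fin t → ZMod 2, (∀ v ∈ A₁, b ⬝ᵥ v = 0) ∧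
          ∃ w : Fin t × Fin M → ZMod 2, (∀ k, ∑ j, w (k, j) = 0) ∧
            z = (fun p : Fin t × Fin M => b p.1 * (if (p.2 : ℕ) = 0 then 1 else 0)) + w}) :
    -- (a)
    (∀ x ∈ C₂, ∀ z ∈ CZ, x ⬝ᵥ z = 0) ∧
    -- (b)
    Module.finrank (ZMod 2) C₂ = Module.finrank (ZMod 2) A₂ ∧
    Module.finrank (ZMod 2) CZ = (t - Module.finrank (ZMod 2) A₁) + t * (M - 1) ∧
    t * M - Module.finrank (ZMod 2) C₂ - Module.finrank (ZMod 2) CZ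
      = Module.finrank (ZMod 2) A₁ - Module.finrank (ZMod 2) A₂ ∧
    -- (c)
    ({v : Fin t × Fin M → ZMod 2 | ∀ z ∈ CZ, v ⬝ᵥ z = 0}
      = {v : Fin t × Fin M → ZMod 2 | ∃ f ∈ A₁, v = fun p => f p.1}) ∧
    (∀ v : Fin t × Fin M → ZMod 2, (∀ z ∈ CZ, v ⬝ᵥ z = 0) → v ∉ C₂ →
      M * sInf {k | ∃ a ∈ A₁, a ≠ 0 ∧ hammingNorm a = k} ≤ hammingNorm v) ∧
    (∀ z : Fin t × Fin M → ZMod 2, (∀ x ∈ C₂, z ⬝ᵥ x = 0) → z ∉ CZ →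
      sInf {k | ∃ a : Fin t → ZMod 2, (∀ v ∈ A₂, a ⬝ᵥ v = 0) ∧ a ≠ 0 ∧ hammingNorm a = k}
        ≤ hammingNorm z) ∧
    (∀ v : Fin t × Fin M → ZMod 2,
      ((∀ z ∈ CZ, v ⬝ᵥ z = 0) ∧ v ∉ C₂) ∨ ((∀ x ∈ C₂, v ⬝ᵥ x = 0) ∧ v ∉ CZ) →
      min (M * sInf {k | ∃ a ∈ A₁, a ≠ 0 ∧ hammingNorm a = k})
          (sInf {k | ∃ a : Fin t → ZMod 2,
            (∀ u ∈ A₂, a ⬝ᵥ u = 0) ∧ a ≠ 0 ∧ hammingNorm a = k})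
        ≤ hammingNorm v) :=
  css_product_construction_general t M hM A₂ A₁ hsub C₂ CZ hC₂ hCZ
end

section
/- Let l ≥ 3 be an integer, let C ⊆ F₂^m be a binary linear code in which every codeword has even Hamming weight, let ε : C → {±1} be a character of the additive group C, and suppose Σ_{v∈C} ε_v (i tan(2π/2^l))^{w_H(v)} = (sec(2π/2^l))^m. Then: (1) if ε is trivial (ε_v = 1 for all v ∈ C), then 2^l divides m − 2·w_H(w) for every w ∈ C^⊥; (2) if ε is nontrivial and B = {v ∈ C : ε_v = 1}, then 2^l divides m − 2·w_H(w) for every w ∈ B^⊥ ∖ C^⊥. -/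
/-!
Put `ζ = e^{iθ}`. Coordinatewise `cos θ = (ζ + ζ⁻¹)/2` and `i sin θ = (ζ - ζ⁻¹)/2`, so expanding the
product `∏ⱼ (cos θ or i sin θ)` over `s ∈ F₂^m` turns `cos^m θ · Σ_{v∈C} ε_v (i tan θ)^{w_H(v)}` into
`2^{-m} Σ_s c_s ζ^{m - 2 w_H(s)}`, where `c_s = Σ_{v∈C} ε_v (-1)^{s·v}` is `|C|` if `ε_v = (-1)^{s·v}` on `C`
and `0` otherwise. At `ζ = 1` the same expansion gives `Σ_s c_s = 2^m`, and the hypothesis says the sum at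
`ζ = e^{iθ}` is `2^m` as well. The weights `c_s` are nonnegative and `|ζ^k| = 1`, so `ζ^{m - 2 w_H(s)} = 1`
whenever `c_s ≠ 0`; for `θ = 2π/2^l` this is `2^l ∣ m - 2 w_H(s)`. In both cases of the theorem
`ε_v = (-1)^{w·v}` on `C` (in the second because `B` has index two in `C`), so `c_w = |C| ≠ 0`.
-/

open Matrix Finset

-- `χ₂ a = (-1) ^ a`
local notation "χ₂" => (ZMod.stdAddChar : AddChar (ZMod 2) ℂ)

theorem AddChar.map_sum_eq_prod {A M ι : Type*} [AddCommMonoid A] [CommMonoid M]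
    (ψ : AddChar A M) (s : Finset ι) (f : ι → A) : ψ (∑ i ∈ s, f i) = ∏ i ∈ s, ψ (f i) :=
  map_prod ψ.toMonoidHom (fun i => Multiplicative.ofAdd (f i)) s

theorem ZMod.stdAddChar_two_one : χ₂ 1 = -1 := by
  have h := ZMod.stdAddChar_coe (N := 2) 1
  rw [Int.cast_one] at h
  rw [h, ← Complex.exp_pi_mul_I]
  congr 1
  push_cast
  ring

theorem sum_eq_zero_of_map_add_eq_mul {G R : Type*} [AddGroup G] [Semiring R] [IsDomain R]
    {S : Finset G} {ψ : G → R} {u : G} (hS : ∀ v, v ∈ S ↔ u + v ∈ S)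
    (hψ : ∀ v ∈ S, ψ (u + v) = ψ u * ψ v) (hu : ψ u ≠ 1) : ∑ v ∈ S, ψ v = 0 :=
  eq_zero_of_mul_eq_self_left hu <| by
    rw [mul_sum]
    exact sum_equiv (Equiv.addLeft u) hS fun v hv => (hψ v hv).symm

open scoped ComplexOrder in
theorem Complex.eq_one_of_sum_mul_eq_sum {α : Type*} {s : Finset α} {a : α → ℝ} {z : α → ℂ}
    (ha : ∀ i ∈ s, 0 ≤ a i) (hz : ∀ i ∈ s, ‖z i‖ ≤ 1)
    (h : ∑ i ∈ s, a i * z i = ∑ i ∈ s, (a i : ℂ)) {i : α} (hi : i ∈ s) (hai : a i ≠ 0) :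
    z i = 1 := by
  have hre_le : ∀ j ∈ s, (z j).re ≤ 1 := fun j hj => (re_le_norm _).trans (hz j hj)
  have hsum : ∑ j ∈ s, a j * (1 - (z j).re) = 0 := by
    have := congrArg re (sub_eq_zero.mpr h)
    simp only [← sum_sub_distrib, re_sum, sub_re, re_ofReal_mul, ofReal_re, zero_re] at this
    rw [← neg_eq_zero, ← this, ← sum_neg_distrib]
    exact sum_congr rfl fun j _ => by ring
  have hzi : (z i).re = 1 := by
    have := (sum_eq_zero_iff_of_nonneg fun j hj =>
      mul_nonneg (ha j hj) (sub_nonneg.mpr (hre_le j hj))).mp hsum i hi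
    linarith [(mul_eq_zero.mp this).resolve_left hai]
  have hnonneg : 0 ≤ z i := re_eq_norm.mp (le_antisymm (re_le_norm _) (hzi ▸ hz i hi))
  exact ext hzi (nonneg_iff.mp hnonneg).2.symm

theorem Complex.exp_two_pi_div_mul_I_zpow_eq_one_iff {n : ℕ} (hn : n ≠ 0) (k : ℤ) :
    exp (↑(2 * Real.pi / n) * I) ^ k = 1 ↔ (n : ℤ) ∣ k := by
  rw [← (isPrimitiveRoot_exp n hn).zpow_eq_one_iff_dvd]
  push_cast
  ring_nf

theorem Real.cos_two_pi_div_two_pow_pos {l : ℕ} (hl : 3 ≤ l) : 0 < cos (2 * Real.pi / 2 ^ l) := by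
  have h8 : (8 : ℝ) ≤ 2 ^ l := by exact_mod_cast (Nat.pow_le_pow_right two_pos hl : 2 ^ 3 ≤ 2 ^ l)
  apply cos_pos_of_mem_Ioo
  constructor
  · linarith [show 0 < 2 * Real.pi / 2 ^ l by positivity, pi_pos]
  · rw [div_lt_iff₀ (by positivity)]
    nlinarith [pi_pos]

section

variable {ι : Type*} [Fintype ι]

theorem prod_ite_eq_zero_eq_pow_mul_pow {β M : Type*} [Zero β] [DecidableEq β] [CommMonoid M]
    (v : ι → β) (x y : M) :
    ∏ j, (if v j = 0 then x else y) = x ^ (Fintype.card ι - hammingNorm v) * y ^ hammingNorm v := by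
  rw [prod_ite, prod_const, prod_const]
  congr 2
  rw [← card_univ, ← card_filter_add_card_filter_not (s := univ) (fun j => v j = 0)]
  simp [hammingNorm]

theorem ite_eq_sum_stdAddChar (ζ : ℂ) (a : ZMod 2) :
    (if a = 0 then (ζ + ζ⁻¹) / 2 else (ζ - ζ⁻¹) / 2)
      = ∑ b : ZMod 2, χ₂ (b * a) * (if b = 0 then ζ else ζ⁻¹) / 2 := by
  rw [show (univ : Finset (ZMod 2)) = {0, 1} from rfl, sum_pair zero_ne_one]
  obtain rfl | rfl : a = 0 ∨ a = 1 := by revert a; decide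
  · simp only [↓reduceIte, mul_zero, AddChar.map_zero_eq_one, one_mul, one_ne_zero]
    ring
  · simp only [one_ne_zero, ↓reduceIte, mul_one, AddChar.map_zero_eq_one, one_mul,
      ZMod.stdAddChar_two_one, neg_mul]
    ring

theorem prod_ite_exp_mul_I_eq {θ : ℝ} (hcos : Real.cos θ ≠ 0) (v : ι → ZMod 2) :
    ∏ j, (if v j = 0 then (Complex.exp (θ * Complex.I) + (Complex.exp (θ * Complex.I))⁻¹) / 2
      else (Complex.exp (θ * Complex.I) - (Complex.exp (θ * Complex.I))⁻¹) / 2)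
      = (Complex.I * Real.tan θ) ^ hammingNorm v * (Real.cos θ : ℂ) ^ Fintype.card ι := by
  have hc : (Complex.exp (θ * Complex.I) + (Complex.exp (θ * Complex.I))⁻¹) / 2 = Real.cos θ := by
    rw [← Complex.exp_neg, Complex.ofReal_cos, Complex.cos, neg_mul]
  have hs : (Complex.exp (θ * Complex.I) - (Complex.exp (θ * Complex.I))⁻¹) / 2
      = Complex.I * Real.sin θ := by
    rw [← Complex.exp_neg, Complex.ofReal_sin, Complex.sin, neg_mul]
    linear_combination
      (Complex.exp (θ * Complex.I) - Complex.exp (-(θ * Complex.I))) / 2 * Complex.I_sq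
  have ht : Complex.I * Real.tan θ = Complex.I * Real.sin θ / Real.cos θ := by
    rw [Real.tan_eq_sin_div_cos, Complex.ofReal_div, mul_div_assoc]
  rw [hc, hs, prod_ite_eq_zero_eq_pow_mul_pow, ht,
    ← pow_sub_mul_pow (Real.cos θ : ℂ) (hammingNorm_le_card_fintype (x := v)), div_pow,
    mul_left_comm, div_mul_cancel₀ _ (pow_ne_zero _ (Complex.ofReal_ne_zero.mpr hcos))]

noncomputable def walshTransform (S : Finset (ι → ZMod 2)) (ε : (ι → ZMod 2) → ℂ)
    (s : ι → ZMod 2) : ℂ :=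
  ∑ v ∈ S, ε v * χ₂ (s ⬝ᵥ v)

theorem walshTransform_eq_card {S : Finset (ι → ZMod 2)} {ε : (ι → ZMod 2) → ℂ} {s : ι → ZMod 2}
    (h : ∀ v ∈ S, ε v * χ₂ (s ⬝ᵥ v) = 1) : walshTransform S ε s = #S := by
  rw [walshTransform, sum_congr rfl h, sum_const, nsmul_one]

theorem eq_stdAddChar_dotProduct_of_mem_dual_of_not_mem_dual
    {C : Submodule (ZMod 2) (ι → ZMod 2)} {ε : (ι → ZMod 2) → ℂ}
    (hsign : ∀ v ∈ C, ε v = 1 ∨ ε v = -1) (hhom : ∀ v ∈ C, ∀ u ∈ C, ε (v + u) = ε v * ε u)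
    {w : ι → ZMod 2} (hB : ∀ v ∈ C, ε v = 1 → w ⬝ᵥ v = 0) (hC : ¬ ∀ v ∈ C, w ⬝ᵥ v = 0) :
    ∀ v ∈ C, ε v = χ₂ (w ⬝ᵥ v) := by
  have h_eq_one : ∀ a : ZMod 2, a ≠ 0 → a = 1 := by decide
  obtain ⟨u, hu, hwu⟩ := not_forall₂.mp hC
  have hεu : ε u = -1 := (hsign u hu).resolve_left fun h => hwu (hB u hu h)
  intro v hv
  rcases hsign v hv with hεv | hεv
  · rw [hεv, hB v hv hεv, AddChar.map_zero_eq_one]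
  · have hvu : w ⬝ᵥ (v + u) = 0 :=
      hB _ (C.add_mem hv hu) (by rw [hhom v hv u hu, hεv, hεu]; norm_num)
    rw [dotProduct_add, h_eq_one _ hwu] at hvu
    have hwv : w ⬝ᵥ v = 1 := (eq_neg_of_add_eq_zero_left hvu).trans (by decide)
    rw [hεv, hwv, ZMod.stdAddChar_two_one]

variable [DecidableEq ι]

theorem prod_ite_eq_sum_stdAddChar_mul_zpow {ζ : ℂ} (hζ : ζ ≠ 0) (v : ι → ZMod 2) :
    ∏ j, (if v j = 0 then (ζ + ζ⁻¹) / 2 else (ζ - ζ⁻¹) / 2)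
      = (2 ^ Fintype.card ι)⁻¹ *
        ∑ s, χ₂ (s ⬝ᵥ v) * ζ ^ ((Fintype.card ι : ℤ) - 2 * hammingNorm s) := by
  simp_rw [ite_eq_sum_stdAddChar ζ, Fintype.prod_sum, mul_sum]
  refine sum_congr rfl fun s _ => ?_
  have hw := hammingNorm_le_card_fintype (x := s)
  rw [prod_div_distrib, prod_mul_distrib, ← AddChar.map_sum_eq_prod,
    prod_ite_eq_zero_eq_pow_mul_pow, prod_const, card_univ, inv_pow,
    show (Fintype.card ι : ℤ) - 2 * hammingNorm s
      = ((Fintype.card ι - hammingNorm s : ℕ) : ℤ) + -(hammingNorm s : ℤ) by omega,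
    zpow_add₀ hζ, _root_.zpow_neg, zpow_natCast, zpow_natCast, div_eq_inv_mul]
  rfl

theorem sum_mul_prod_ite_eq_sum_walshTransform (S : Finset (ι → ZMod 2))
    (ε : (ι → ZMod 2) → ℂ) {ζ : ℂ} (hζ : ζ ≠ 0) :
    ∑ v ∈ S, ε v * ∏ j, (if v j = 0 then (ζ + ζ⁻¹) / 2 else (ζ - ζ⁻¹) / 2)
      = (2 ^ Fintype.card ι)⁻¹ *
        ∑ s, walshTransform S ε s * ζ ^ ((Fintype.card ι : ℤ) - 2 * hammingNorm s) := by
  simp_rw [prod_ite_eq_sum_stdAddChar_mul_zpow hζ, walshTransform, sum_mul, mul_sum]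
  rw [sum_comm]
  exact sum_congr rfl fun s _ => sum_congr rfl fun v _ => by ring

theorem sum_walshTransform {S : Finset (ι → ZMod 2)} (hS : 0 ∈ S) (ε : (ι → ZMod 2) → ℂ) :
    ∑ s, walshTransform S ε s = 2 ^ Fintype.card ι * ε 0 := by
  have h := sum_mul_prod_ite_eq_sum_walshTransform S ε one_ne_zero
  have hprod : ∀ v : ι → ZMod 2,
      (∏ j, if v j = 0 then (1 + 1⁻¹) / 2 else (1 - 1⁻¹) / 2 : ℂ) = if v = 0 then 1 else 0 := by
    intro v
    norm_num [prod_boole, funext_iff]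
  simp only [hprod, mul_ite, mul_one, mul_zero, sum_ite_eq', if_pos hS, _root_.one_zpow] at h
  rw [h, mul_inv_cancel_left₀ (pow_ne_zero _ two_ne_zero)]

theorem walshTransform_eq_zero {C : Submodule (ZMod 2) (ι → ZMod 2)} [DecidablePred (· ∈ C)]
    {ε : (ι → ZMod 2) → ℂ} (hhom : ∀ v ∈ C, ∀ u ∈ C, ε (v + u) = ε v * ε u)
    {s : ι → ZMod 2} (h : ¬ ∀ v ∈ C, ε v * χ₂ (s ⬝ᵥ v) = 1) :
    walshTransform (univ.filter (· ∈ C)) ε s = 0 := by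
  obtain ⟨u, hu, hne⟩ := not_forall₂.mp h
  refine sum_eq_zero_of_map_add_eq_mul (u := u) (fun v => ?_) (fun v hv => ?_) hne
  · simp [C.add_mem_iff_right hu]
  · rw [hhom u hu v (mem_filter.mp hv).2, dotProduct_add, AddChar.map_add_eq_mul]
    ring

theorem exp_mul_I_zpow_eq_one_of_sum_eq_inv_cos_pow {C : Submodule (ZMod 2) (ι → ZMod 2)}
    [DecidablePred (· ∈ C)] {ε : (ι → ZMod 2) → ℂ} (hsign : ∀ v ∈ C, ε v = 1 ∨ ε v = -1)
    (hhom : ∀ v ∈ C, ∀ u ∈ C, ε (v + u) = ε v * ε u) {θ : ℝ} (hcos : Real.cos θ ≠ 0)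
    (hsum : ∑ v ∈ univ.filter (· ∈ C), ε v * (Complex.I * Real.tan θ) ^ hammingNorm v
      = ((Real.cos θ : ℂ))⁻¹ ^ Fintype.card ι)
    {w : ι → ZMod 2} (hw : ∀ v ∈ C, ε v = χ₂ (w ⬝ᵥ v)) :
    Complex.exp (θ * Complex.I) ^ ((Fintype.card ι : ℤ) - 2 * hammingNorm w) = 1 := by
  set S := univ.filter (· ∈ C)
  have h0S : (0 : ι → ZMod 2) ∈ S := by simp [S, C.zero_mem]
  have hε0 : ε 0 = 1 := by
    have h := hhom 0 C.zero_mem 0 C.zero_mem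
    rcases hsign 0 C.zero_mem with h0 | h0
    · exact h0
    · rw [add_zero, h0] at h; norm_num at h
  have hsum_zpow : ∑ s, walshTransform S ε s *
        Complex.exp (θ * Complex.I) ^ ((Fintype.card ι : ℤ) - 2 * hammingNorm s)
      = ∑ s, walshTransform S ε s := by
    have h := sum_mul_prod_ite_eq_sum_walshTransform S ε (Complex.exp_ne_zero (θ * Complex.I))
    simp_rw [prod_ite_exp_mul_I_eq hcos, ← mul_assoc, ← sum_mul, hsum, ← mul_pow,
      inv_mul_cancel₀ (Complex.ofReal_ne_zero.mpr hcos), one_pow] at h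
    rw [sum_walshTransform h0S, hε0, mul_one]
    exact ((inv_mul_eq_one₀ (by simp)).mp h.symm).symm
  classical
  let a : (ι → ZMod 2) → ℝ := fun s => if ∀ v ∈ S, ε v * χ₂ (s ⬝ᵥ v) = 1 then #S else 0
  have ha : ∀ s, walshTransform S ε s = a s := by
    intro s
    by_cases h : ∀ v ∈ S, ε v * χ₂ (s ⬝ᵥ v) = 1
    · simp only [a, if_pos h, walshTransform_eq_card h, Complex.ofReal_natCast]
    · rw [walshTransform_eq_zero hhom (fun h' => h fun v hv => h' v (mem_filter.mp hv).2)]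
      simp [a, if_neg h]
  refine Complex.eq_one_of_sum_mul_eq_sum (s := univ) (a := a) (fun s _ => ?_) (fun s _ => ?_)
    (by simpa only [ha] using hsum_zpow) (mem_univ w) ?_
  · positivity
  · rw [norm_zpow, Complex.norm_exp_ofReal_mul_I, _root_.one_zpow]
  · have hP : ∀ v ∈ S, ε v * χ₂ (w ⬝ᵥ v) = 1 := fun v hv => by
      rw [hw v (mem_filter.mp hv).2, ← AddChar.map_add_eq_mul, CharTwo.add_self_eq_zero,
        AddChar.map_zero_eq_one]
    simp only [a, if_pos hP]
    exact_mod_cast (card_pos.mpr ⟨0, h0S⟩).ne'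

end

open scoped Classical in
theorem divisibility_with_character_general (m l : ℕ) (hl : 3 ≤ l)
    (C : Submodule (ZMod 2) (Fin m → ZMod 2))
    (ε : (Fin m → ZMod 2) → ℂ)
    (hsign : ∀ v ∈ C, ε v = 1 ∨ ε v = -1)
    (hhom : ∀ v ∈ C, ∀ u ∈ C, ε (v + u) = ε v * ε u)
    (hsum : ∑ v ∈ Finset.univ.filter (fun v : Fin m → ZMod 2 => v ∈ C),
        ε v * (Complex.I * Real.tan (2 * Real.pi / 2 ^ l)) ^ hammingNorm v
      = ((Real.cos (2 * Real.pi / 2 ^ l) : ℂ))⁻¹ ^ m) :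
    ((∀ v ∈ C, ε v = 1) →
      ∀ w : Fin m → ZMod 2, (∀ v ∈ C, w ⬝ᵥ v = 0) →
        (2 ^ l : ℤ) ∣ ((m : ℤ) - 2 * (hammingNorm w : ℤ))) ∧
    ((¬ ∀ v ∈ C, ε v = 1) →
      ∀ w : Fin m → ZMod 2, (∀ v ∈ C, ε v = 1 → w ⬝ᵥ v = 0) → (¬ ∀ v ∈ C, w ⬝ᵥ v = 0) →
        (2 ^ l : ℤ) ∣ ((m : ℤ) - 2 * (hammingNorm w : ℤ))) := by
  have hdvd : ∀ w, (∀ v ∈ C, ε v = χ₂ (w ⬝ᵥ v)) →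
      (2 ^ l : ℤ) ∣ ((m : ℤ) - 2 * (hammingNorm w : ℤ)) := by
    intro w hw
    have h := exp_mul_I_zpow_eq_one_of_sum_eq_inv_cos_pow hsign hhom
      (Real.cos_two_pi_div_two_pow_pos hl).ne' (by rwa [Fintype.card_fin]) hw
    have hroot := Complex.exp_two_pi_div_mul_I_zpow_eq_one_iff (n := 2 ^ l) (by positivity)
    simp only [Nat.cast_pow, Nat.cast_ofNat] at hroot
    rwa [Fintype.card_fin, hroot] at h
  refine ⟨fun htriv w hw => hdvd w fun v hv => ?_, fun _ w hB hC =>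
    hdvd w (eq_stdAddChar_dotProduct_of_mem_dual_of_not_mem_dual hsign hhom hB hC)⟩
  rw [htriv v hv, hw v hv, AddChar.map_zero_eq_one]

open scoped Classical in
/-- Corollary 4 of the paper. Let `l ≥ 3`, let `C ⊆ F₂^m` be a binary linear
code with all codeword weights even, let `ε : C → {±1}` be a character of the additive group
`C`, and suppose `Σ_{v∈C} ε_v (i tan(2π/2^l))^{w_H(v)} = (sec(2π/2^l))^m`. Then:
(1) if `ε` is trivial, `2^l ∣ m − 2·w_H(w)` for every `w ∈ C^⊥`;
(2) if `ε` is nontrivial and `B = {v ∈ C : ε_v = 1}`, then `2^l ∣ m − 2·w_H(w)` for every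
`w ∈ B^⊥ ∖ C^⊥`. -/
theorem divisibility_with_character (m l : ℕ) (hl : 3 ≤ l)
    (C : Submodule (ZMod 2) (Fin m → ZMod 2))
    (hev : ∀ v ∈ C, Even (hammingNorm v))
    (ε : (Fin m → ZMod 2) → ℂ)
    (hsign : ∀ v ∈ C, ε v = 1 ∨ ε v = -1)
    (hhom : ∀ v ∈ C, ∀ u ∈ C, ε (v + u) = ε v * ε u)
    (hsum : ∑ v ∈ Finset.univ.filter (fun v : Fin m → ZMod 2 => v ∈ C),
        ε v * (Complex.I * Real.tan (2 * Real.pi / 2 ^ l)) ^ hammingNorm v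
      = ((Real.cos (2 * Real.pi / 2 ^ l) : ℂ))⁻¹ ^ m) :
    ((∀ v ∈ C, ε v = 1) →
      ∀ w : Fin m → ZMod 2, (∀ v ∈ C, w ⬝ᵥ v = 0) →
        (2 ^ l : ℤ) ∣ ((m : ℤ) - 2 * (hammingNorm w : ℤ))) ∧
    ((¬ ∀ v ∈ C, ε v = 1) →
      ∀ w : Fin m → ZMod 2, (∀ v ∈ C, ε v = 1 → w ⬝ᵥ v = 0) → (¬ ∀ v ∈ C, w ⬝ᵥ v = 0) →
        (2 ^ l : ℤ) ∣ ((m : ℤ) - 2 * (hammingNorm w : ℤ))) :=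
  divisibility_with_character_general m l hl C ε hsign hhom hsum
end
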